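/- arXiv:1104.3908 — 3 statements merged into one kernel-verified Lean document; each statement's English description precedes it below -/
import Mathlib

section
/- Let f : ℝ^m → ℂ be a slowly increasing smooth function such that f(x) ≠ 0 for every x ∈ ℝ^m, and let a ∈ 𝒮'_m be a tempered distribution such that the product fa is the zero distribution, i.e. a(f·φ) = 0 for every Schwartz function φ ∈ 𝒮_m. Then a = 0. -/
set_option maxHeartbeats 1000000
open SchwartzMap Metric Filter Topology ContDiff

/-- The partial derivative of `f : ℝ^m → ℂ` in the `i`-th coordinate direction. -/
noncomputable def pDeriv {m : ℕ} (i : Fin m) (f : (Fin m → ℝ) → ℂ) : (Fin m → ℝ) → ℂ :=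
  fun x => fderiv ℝ f x (Pi.single i 1)

/-- The multi-index partial derivative `∂^α f` of `f : ℝ^m → ℂ`. -/
noncomputable def multiDeriv {m : ℕ} (α : Fin m → ℕ) (f : (Fin m → ℝ) → ℂ) :
    (Fin m → ℝ) → ℂ :=
  (List.finRange m).foldr (fun i g => (pDeriv i)^[α i] g) f

/-- A function `f : ℝ^m → ℂ` is slowly increasing (of class `𝒪_M`) if it is smooth and
every multi-index derivative `∂^α f` is bounded in absolute value by a polynomial. -/
def SlowlyIncreasing {m : ℕ} (f : (Fin m → ℝ) → ℂ) : Prop :=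
  ContDiff ℝ (⊤ : ℕ∞) f ∧ ∀ α : Fin m → ℕ, ∃ P : MvPolynomial (Fin m) ℝ,
    ∀ x : Fin m → ℝ, ‖multiDeriv α f x‖ ≤ |MvPolynomial.eval x P|

/-- A smooth compactly supported function is a Schwartz function. -/
noncomputable def mySchwartzOfCompactSupport {g : (Fin m → ℝ) → ℂ}
    (hg : ContDiff ℝ ∞ g) (h : HasCompactSupport g) : 𝓢((Fin m → ℝ), ℂ) where
  toFun := g
  smooth' := hg
  decay' := by
    intro k n
    have hu : Continuous fun x : Fin m → ℝ => ‖x‖ ^ k * ‖iteratedFDeriv ℝ n g x‖ :=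
      (continuous_norm.pow k).mul (hg.continuous_iteratedFDeriv (by exact_mod_cast le_top)).norm
    have hsupp : HasCompactSupport fun x : Fin m → ℝ => ‖x‖ ^ k * ‖iteratedFDeriv ℝ n g x‖ :=
      ((h.iteratedFDeriv n).norm).mul_left
    obtain ⟨x₀, hx₀⟩ := hu.exists_forall_ge_of_hasCompactSupport hsupp
    exact ⟨_, hx₀⟩

@[simp] lemma mySchwartzOfCompactSupport_apply {g : (Fin m → ℝ) → ℂ}
    (hg : ContDiff ℝ ∞ g) (h : HasCompactSupport g) (x : Fin m → ℝ) :
    mySchwartzOfCompactSupport hg h x = g x := rfl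

lemma myBumpDerivBound (χ : ContDiffBump (0 : Fin m → ℝ)) (n : ℕ) :
    ∃ B : ℝ, 0 ≤ B ∧ ∀ (R : ℝ), 1 ≤ R → ∀ x : Fin m → ℝ,
      ‖iteratedFDeriv ℝ n (fun y => χ (R⁻¹ • y)) x‖ ≤ B := by
  obtain ⟨y₀, hy₀⟩ := ((χ.contDiff.continuous_iteratedFDeriv
      (n := (⊤ : ℕ∞)) (by exact_mod_cast le_top)).norm).exists_forall_ge_of_hasCompactSupport
      (χ.hasCompactSupport.iteratedFDeriv n).norm
  refine ⟨max ‖iteratedFDeriv ℝ n (⇑χ) y₀‖ 0, le_max_right _ _, fun R hR x => ?_⟩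
  have hRpos : (0:ℝ) < R := lt_of_lt_of_le one_pos hR
  set L : (Fin m → ℝ) →L[ℝ] (Fin m → ℝ) := R⁻¹ • ContinuousLinearMap.id ℝ (Fin m → ℝ) with hL
  have hfun : (fun y => χ (R⁻¹ • y)) = (⇑χ) ∘ L := rfl
  rw [hfun, L.iteratedFDeriv_comp_right χ.contDiff x (by exact_mod_cast le_top)]
  calc ‖(iteratedFDeriv ℝ n (⇑χ) (L x)).compContinuousLinearMap fun _ => L‖
      ≤ ‖iteratedFDeriv ℝ n (⇑χ) (L x)‖ * ∏ _i : Fin n, ‖L‖ :=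
        ContinuousMultilinearMap.norm_compContinuousLinearMap_le _ _
    _ ≤ ‖iteratedFDeriv ℝ n (⇑χ) y₀‖ * 1 := by
        apply mul_le_mul (hy₀ _) ?_ (by positivity) (norm_nonneg _)
        apply Finset.prod_le_one (fun _ _ => norm_nonneg _)
        intro i _
        calc ‖L‖ ≤ ‖R⁻¹‖ * ‖ContinuousLinearMap.id ℝ (Fin m → ℝ)‖ := by
              rw [hL]; exact norm_smul_le R⁻¹ (ContinuousLinearMap.id ℝ (Fin m → ℝ))
          _ = R⁻¹ * ‖ContinuousLinearMap.id ℝ (Fin m → ℝ)‖ := by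
              rw [Real.norm_eq_abs, abs_of_pos (by positivity)]
          _ ≤ R⁻¹ * 1 :=
              mul_le_mul_of_nonneg_left ContinuousLinearMap.norm_id_le (by positivity)
          _ ≤ 1 := by rw [mul_one]; exact inv_le_one_of_one_le₀ hR
    _ ≤ max ‖iteratedFDeriv ℝ n (⇑χ) y₀‖ 0 := by rw [mul_one]; exact le_max_left _ _

/-- If `f` is slowly increasing and nowhere vanishing and `a` is a tempered distribution
with `a(f·φ) = 0` for every Schwartz `φ` (i.e. the product `fa` is the zero distribution),
then `a = 0`. -/
theorem eq_zero_of_mul_eq_zero {m : ℕ}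
    (f : (Fin m → ℝ) → ℂ) (hf : SlowlyIncreasing f) (hf0 : ∀ x, f x ≠ 0)
    (M : 𝓢((Fin m → ℝ), ℂ) →L[ℂ] 𝓢((Fin m → ℝ), ℂ))
    (hM : ∀ (g : 𝓢((Fin m → ℝ), ℂ)) (x : Fin m → ℝ), M g x = f x * g x)
    (a : 𝓢((Fin m → ℝ), ℂ) →L[ℂ] ℂ)
    (ha : ∀ φ : 𝓢((Fin m → ℝ), ℂ), a (M φ) = 0) :
    a = 0 := by
  have hfc : ContDiff ℝ ∞ f := hf.1.of_le (by simp)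
  have hfinv : ContDiff ℝ ∞ fun x => (f x)⁻¹ := hfc.inv hf0
  set χ : ContDiffBump (0 : Fin m → ℝ) := ⟨1, 2, one_pos, one_lt_two⟩ with hχdef
  choose B hB0 hB using myBumpDerivBound χ
  ext φ
  simp only [ContinuousLinearMap.zero_apply]
  -- radii
  set R : ℕ → ℝ := fun j => (j : ℝ) + 1 with hRdef
  have hR1 : ∀ j, 1 ≤ R j := fun j => by simp [hRdef]
  have hRpos : ∀ j, (0:ℝ) < R j := fun j => lt_of_lt_of_le one_pos (hR1 j)
  -- cutoffs
  set c : ℕ → (Fin m → ℝ) → ℝ := fun j x => χ ((R j)⁻¹ • x) with hcdef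
  have hc_smooth : ∀ j, ContDiff ℝ ∞ (c j) :=
    fun j => χ.contDiff.comp (contDiff_const_smul (R j)⁻¹)
  have hc_one : ∀ j (x : Fin m → ℝ), ‖x‖ ≤ R j → c j x = 1 := by
    intro j x hx
    apply χ.one_of_mem_closedBall
    rw [mem_closedBall_zero_iff, norm_smul, Real.norm_eq_abs,
      abs_of_pos (by positivity : (0:ℝ) < (R j)⁻¹)]
    have : (R j)⁻¹ * ‖x‖ ≤ (R j)⁻¹ * R j :=
      mul_le_mul_of_nonneg_left hx (by positivity)
    simpa [inv_mul_cancel₀ (hRpos j).ne'] using this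
  have hc_zero : ∀ j (x : Fin m → ℝ), 2 * R j < ‖x‖ → c j x = 0 := by
    intro j x hx
    apply χ.zero_of_le_dist
    rw [dist_zero_right, norm_smul, Real.norm_eq_abs,
      abs_of_pos (by positivity : (0:ℝ) < (R j)⁻¹)]
    show (2:ℝ) ≤ _
    rw [le_inv_mul_iff₀ (hRpos j)]
    linarith
  have hc_bound : ∀ n j (x : Fin m → ℝ), ‖iteratedFDeriv ℝ n (c j) x‖ ≤ B n :=
    fun n j x => hB n (R j) (hR1 j) x
  -- the compactly supported Schwartz functions ψ j
  have hψ_smooth : ∀ j, ContDiff ℝ ∞ fun x => (c j x • φ x) * (f x)⁻¹ :=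
    fun j => (((hc_smooth j).smul φ.smooth').mul hfinv)
  have hψ_supp : ∀ j, HasCompactSupport fun x => (c j x • φ x) * (f x)⁻¹ := by
    intro j
    apply HasCompactSupport.intro (isCompact_closedBall (0 : Fin m → ℝ) (2 * R j))
    intro x hx
    rw [mem_closedBall_zero_iff, not_le] at hx
    rw [hc_zero j x hx, zero_smul, zero_mul]
  set ψ : ℕ → 𝓢((Fin m → ℝ), ℂ) :=
    fun j => mySchwartzOfCompactSupport (hψ_smooth j) (hψ_supp j) with hψdef
  have hMψ : ∀ j (x : Fin m → ℝ), (M (ψ j)) x = c j x • φ x := by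
    intro j x
    rw [hM, hψdef]
    simp only [mySchwartzOfCompactSupport_apply]
    rw [← mul_assoc, mul_comm (f x), mul_assoc, mul_inv_cancel₀ (hf0 x), mul_one]
  -- the coe of the difference
  have hdiff : ∀ j, ⇑(M (ψ j) - φ) = fun x => (c j x - 1) • φ x := by
    intro j
    funext x
    rw [SchwartzMap.sub_apply, hMψ j x, sub_smul, one_smul]
  -- key seminorm estimate
  have key : ∀ k n : ℕ, ∃ C : ℝ, 0 ≤ C ∧ ∀ j,
      SchwartzMap.seminorm ℝ k n (M (ψ j) - φ) ≤ C / R j := by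
    intro k n
    have hsemnonneg : ∀ (l i : ℕ), 0 ≤ SchwartzMap.seminorm ℝ (E := Fin m → ℝ) (F := ℂ) l i φ :=
      fun l i => apply_nonneg _ _
    set C : ℝ := ∑ i ∈ Finset.range (n + 1),
      (n.choose i : ℝ) * (B i + 1) * (SchwartzMap.seminorm ℝ (k+1) (n-i) φ) with hCdef
    have hC0 : 0 ≤ C := by
      apply Finset.sum_nonneg
      intro i _
      have := hB0 i
      have := hsemnonneg (k+1) (n-i)
      positivity
    refine ⟨C, hC0, fun j => ?_⟩
    apply SchwartzMap.seminorm_le_bound ℝ k n _ (div_nonneg hC0 (hRpos j).le)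
    intro x
    rw [hdiff j]
    rcases lt_or_ge ‖x‖ (R j) with hx | hx
    · -- the function vanishes near x
      have hev : (fun x => (c j x - 1) • φ x) =ᶠ[𝓝 x] fun _ => (0:ℂ) := by
        filter_upwards [Metric.ball_mem_nhds x (show (0:ℝ) < R j - ‖x‖ by linarith)] with y hy
        have hy' : ‖y‖ ≤ R j := by
          have := norm_le_norm_add_norm_sub' y x
          rw [mem_ball, dist_eq_norm] at hy
          have h2 : ‖y - x‖ < R j - ‖x‖ := by
            simpa [norm_sub_rev] using hy
          calc ‖y‖ ≤ ‖x‖ + ‖y - x‖ := by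
                simpa [norm_sub_rev] using norm_le_norm_add_norm_sub' y x
            _ ≤ R j := by linarith
        rw [hc_one j y hy', sub_self, zero_smul]
      have : iteratedFDeriv ℝ n (fun x => (c j x - 1) • φ x) x
          = iteratedFDeriv ℝ n (fun _ => (0:ℂ)) x := by
        rw [← iteratedFDerivWithin_univ, ← iteratedFDerivWithin_univ]
        apply Filter.EventuallyEq.iteratedFDerivWithin_eq
        · rw [nhdsWithin_univ]; exact hev
        · exact hev.self_of_nhds
      rw [this, iteratedFDeriv_zero_fun]
      simp only [Pi.zero_apply, norm_zero, mul_zero]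
      positivity
    · -- the decay estimate
      have hcm1 : ContDiff ℝ ∞ fun y => c j y - 1 := (hc_smooth j).sub contDiff_const
      have hterm : ∀ i, ‖iteratedFDeriv ℝ i (fun y => c j y - 1) x‖ ≤ B i + 1 := by
        intro i
        have hfun : (fun y => c j y - 1) = (c j) + (fun _ => (-1:ℝ)) := by
          funext y; simp [sub_eq_add_neg]
        have hsub : iteratedFDeriv ℝ i (fun y => c j y - 1) x
            = iteratedFDeriv ℝ i (c j) x + iteratedFDeriv ℝ i (fun _ => (-1:ℝ)) x := by
          rw [hfun]
          exact iteratedFDeriv_add_apply ((hc_smooth j).contDiffAt.of_le (by exact_mod_cast le_top)) contDiff_const.contDiffAt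
        rw [hsub]
        refine (norm_add_le _ _).trans ?_
        have h1 : ‖iteratedFDeriv ℝ i (fun _ : Fin m → ℝ => (-1:ℝ)) x‖ ≤ 1 := by
          cases i with
          | zero => simp [norm_iteratedFDeriv_zero]
          | succ i => rw [iteratedFDeriv_const_of_ne (Nat.succ_ne_zero i)]; simp
        exact add_le_add (hc_bound i j x) h1
      calc ‖x‖ ^ k * ‖iteratedFDeriv ℝ n (fun y => (c j y - 1) • φ y) x‖
          ≤ ‖x‖ ^ k * ∑ i ∈ Finset.range (n + 1),
            (n.choose i : ℝ) * ‖iteratedFDeriv ℝ i (fun y => c j y - 1) x‖ *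
            ‖iteratedFDeriv ℝ (n - i) (⇑φ) x‖ := by
            apply mul_le_mul_of_nonneg_left _ (by positivity)
            exact norm_iteratedFDeriv_smul_le hcm1 φ.smooth' x (by exact_mod_cast le_top)
        _ = ∑ i ∈ Finset.range (n + 1), (n.choose i : ℝ) *
            ‖iteratedFDeriv ℝ i (fun y => c j y - 1) x‖ *
            (‖x‖ ^ k * ‖iteratedFDeriv ℝ (n - i) (⇑φ) x‖) := by
            rw [Finset.mul_sum]; exact Finset.sum_congr rfl fun i _ => by ring
        _ ≤ ∑ i ∈ Finset.range (n + 1), (n.choose i : ℝ) * (B i + 1) *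
            (SchwartzMap.seminorm ℝ (k+1) (n-i) φ / R j) := by
            apply Finset.sum_le_sum
            intro i _
            have hxi : ‖x‖ ^ k * ‖iteratedFDeriv ℝ (n - i) (⇑φ) x‖
                ≤ SchwartzMap.seminorm ℝ (k+1) (n-i) φ / R j := by
              rw [le_div_iff₀ (hRpos j)]
              calc ‖x‖ ^ k * ‖iteratedFDeriv ℝ (n - i) (⇑φ) x‖ * R j
                  ≤ ‖x‖ ^ k * ‖iteratedFDeriv ℝ (n - i) (⇑φ) x‖ * ‖x‖ :=
                    mul_le_mul_of_nonneg_left hx (by positivity)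
                _ = ‖x‖ ^ (k+1) * ‖iteratedFDeriv ℝ (n - i) (⇑φ) x‖ := by ring
                _ ≤ SchwartzMap.seminorm ℝ (k+1) (n-i) φ :=
                    SchwartzMap.le_seminorm ℝ (k+1) (n-i) φ x
            have h1 : (n.choose i : ℝ) * ‖iteratedFDeriv ℝ i (fun y => c j y - 1) x‖
                ≤ (n.choose i : ℝ) * (B i + 1) :=
              mul_le_mul_of_nonneg_left (hterm i) (by positivity)
            have hb0 := hB0 i
            apply mul_le_mul h1 hxi (by positivity) (by positivity)
        _ = C / R j := by
            rw [hCdef, Finset.sum_div]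
            exact Finset.sum_congr rfl fun i _ => (mul_div_assoc _ _ _).symm
  -- convergence M (ψ j) → φ in the Schwartz topology
  have htend : Tendsto (fun j : ℕ => M (ψ j)) atTop (𝓝 φ) := by
    rw [(schwartz_withSeminorms ℝ (Fin m → ℝ) ℂ).tendsto_nhds]
    rintro ⟨k, n⟩ ε hε
    obtain ⟨C, hC0, hCb⟩ := key k n
    have h1 : Tendsto (fun j : ℕ => C / R j) atTop (𝓝 0) := by
      apply Tendsto.div_atTop tendsto_const_nhds
      exact tendsto_atTop_add_const_right atTop 1 tendsto_natCast_atTop_atTop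
    filter_upwards [h1.eventually (gt_mem_nhds hε)] with j hj
    calc schwartzSeminormFamily ℝ (Fin m → ℝ) ℂ (k, n) (M (ψ j) - φ)
        = SchwartzMap.seminorm ℝ k n (M (ψ j) - φ) := rfl
      _ ≤ C / R j := hCb j
      _ < ε := hj
  -- conclusion
  have h2 : Tendsto (fun j : ℕ => a (M (ψ j))) atTop (𝓝 (a φ)) :=
    (a.continuous.tendsto φ).comp htend
  simp only [ha] at h2
  exact tendsto_nhds_unique h2 tendsto_const_nhds
end

section
/- Let W : 𝒮_n → 𝒮_m be a continuous linear operator (the associated operator of a Schwartz family w), and let f : ℝ^m → ℂ be a slowly increasing smooth function with f(x) ≠ 0 for every x ∈ ℝ^m, with multiplication operator M_f on 𝒮_m. If the family w is 𝒮-linearly independent (i.e. the map 𝒮'_m → 𝒮'_n, a ↦ a ∘ W, is injective), then the product family fw is 𝒮-linearly independent (i.e. the map a ↦ a ∘ (M_f ∘ W) is injective). -/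
set_option maxHeartbeats 1000000

open SchwartzMap
open Filter Metric Function
open scoped ContDiff

section Aux
variable {E : Type*} [NormedAddCommGroup E] [NormedSpace ℝ E] [FiniteDimensional ℝ E]

/-- Build a Schwartz map from a smooth function vanishing outside a compact set. -/
noncomputable def mkCS (h : E → ℂ) (hs : ContDiff ℝ ∞ h) (hc : HasCompactSupport h) :
    𝓢(E, ℂ) where
  toFun := h
  smooth' := hs
  decay' := by
    intro k n
    have h1 : Continuous fun x => ‖x‖ ^ k * ‖iteratedFDeriv ℝ n h x‖ :=
      (continuous_norm.pow k).mul (hs.continuous_iteratedFDeriv (by exact_mod_cast le_top)).norm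
    have h2 : HasCompactSupport fun x => ‖x‖ ^ k * ‖iteratedFDeriv ℝ n h x‖ :=
      ((hc.iteratedFDeriv n).norm).mul_left
    obtain ⟨C, hC⟩ := h1.bounded_above_of_compact_support h2
    exact ⟨C, fun x => (Real.le_norm_self _).trans (hC x)⟩

@[simp] lemma mkCS_apply (h : E → ℂ) (hs hc) (x : E) : mkCS h hs hc x = h x := rfl

/-- A fixed bump function: equal to 1 on the unit ball, supported in the ball of radius 2. -/
noncomputable def cbump : ContDiffBump (0 : E) := ⟨1, 2, one_pos, one_lt_two⟩

/-- The rescaled cutoff. -/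
noncomputable def cutFun (R : ℝ) : E → ℝ := fun x => (cbump : ContDiffBump (0 : E)) (R⁻¹ • x)

lemma cutFun_contDiff (R : ℝ) : ContDiff ℝ ∞ (cutFun (E := E) R) :=
  (ContDiffBump.contDiff _).comp (contDiff_const.smul contDiff_id)

lemma cutFun_eq_one {R : ℝ} (hR : 1 ≤ R) {x : E} (hx : ‖x‖ ≤ R) : cutFun R x = 1 := by
  refine ContDiffBump.one_of_mem_closedBall _ ?_
  have hR0 : (0:ℝ) < R := lt_of_lt_of_le one_pos hR
  simp only [mem_closedBall, dist_zero_right, norm_smul, norm_inv, Real.norm_eq_abs,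
    abs_of_pos hR0, cbump]
  rw [inv_mul_le_iff₀ hR0, mul_one]
  exact hx

lemma cutFun_eq_zero {R : ℝ} (hR : 1 ≤ R) {x : E} (hx : 2 * R ≤ ‖x‖) : cutFun R x = 0 := by
  refine ContDiffBump.zero_of_le_dist (f := cbump) ?_
  have hR0 : (0:ℝ) < R := lt_of_lt_of_le one_pos hR
  simp only [dist_zero_right, norm_smul, norm_inv, Real.norm_eq_abs, abs_of_pos hR0, cbump]
  rw [le_inv_mul_iff₀ hR0]
  linarith

lemma cutFun_nonneg (R : ℝ) (x : E) : 0 ≤ cutFun R x := ContDiffBump.nonneg _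
lemma cutFun_le_one (R : ℝ) (x : E) : cutFun R x ≤ 1 := ContDiffBump.le_one _

/-- The complex-valued cutoff. -/
noncomputable def ccut (R : ℝ) : E → ℂ := fun x => (cutFun R x : ℂ)

lemma ccut_contDiff (R : ℝ) : ContDiff ℝ ∞ (ccut (E := E) R) :=
  Complex.ofRealCLM.contDiff.comp (cutFun_contDiff R)

lemma ccut_norm_le (R : ℝ) (x : E) : ‖ccut R x‖ ≤ 1 := by
  simp only [ccut, Complex.norm_real, Real.norm_eq_abs,
    abs_of_nonneg (cutFun_nonneg R x)]
  exact cutFun_le_one R x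

/-- Uniform bounds on the iterated derivatives of the rescaled cutoffs. -/
lemma exists_cut_bound : ∃ B : ℕ → ℝ, (∀ j, 0 ≤ B j) ∧
    ∀ (j : ℕ) (R : ℝ), 1 ≤ R → ∀ x : E, ‖iteratedFDeriv ℝ j (ccut R) x‖ ≤ B j := by
  have key : ∀ j : ℕ, ∃ Cj : ℝ, 0 ≤ Cj ∧ ∀ (R : ℝ), 1 ≤ R → ∀ x : E,
      ‖iteratedFDeriv ℝ j (ccut R) x‖ ≤ Cj := by
    intro j
    -- bound for the fixed bump
    have hcont : Continuous fun y : E => ‖iteratedFDeriv ℝ j (⇑(cbump : ContDiffBump (0:E))) y‖ :=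
      ((ContDiffBump.contDiff _).continuous_iteratedFDeriv (by exact_mod_cast le_top)).norm
    have hsupp : HasCompactSupport fun y : E =>
        ‖iteratedFDeriv ℝ j (⇑(cbump : ContDiffBump (0:E))) y‖ :=
      (((cbump : ContDiffBump (0:E)).hasCompactSupport).iteratedFDeriv j).norm
    obtain ⟨C, hC⟩ := hcont.bounded_above_of_compact_support hsupp
    have hC' : ∀ y : E, ‖iteratedFDeriv ℝ j (⇑(cbump : ContDiffBump (0:E))) y‖ ≤ max C 0 :=
      fun y => (Real.le_norm_self _).trans ((hC y).trans (le_max_left _ _))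
    refine ⟨max C 0, le_max_right _ _, ?_⟩
    intro R hR x
    have hR0 : (0:ℝ) < R := lt_of_lt_of_le one_pos hR
    -- the scaling map
    set L : E →L[ℝ] E := R⁻¹ • ContinuousLinearMap.id ℝ E with hL
    have hLnorm : ‖L‖ ≤ 1 := by
      refine ContinuousLinearMap.opNorm_le_bound L zero_le_one fun y => ?_
      simp only [hL, ContinuousLinearMap.smul_apply, ContinuousLinearMap.id_apply, norm_smul,
        norm_inv, Real.norm_eq_abs, abs_of_pos hR0, one_mul]
      exact mul_le_of_le_one_left (norm_nonneg _) (inv_le_one_of_one_le₀ hR)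
    -- first pass to the real-valued cutoff
    have h1 : ‖iteratedFDeriv ℝ j (ccut R) x‖ = ‖iteratedFDeriv ℝ j (cutFun R) x‖ := by
      have : ccut (E := E) R = ⇑(Complex.ofRealLI) ∘ cutFun R := rfl
      rw [this]
      exact Complex.ofRealLI.norm_iteratedFDeriv_comp_left (cutFun_contDiff R).contDiffAt
        (by exact_mod_cast le_top)
    rw [h1]
    have h2 : cutFun (E := E) R = ⇑(cbump : ContDiffBump (0:E)) ∘ ⇑L := by
      funext y; simp [cutFun, hL]
    rw [h2, L.iteratedFDeriv_comp_right (ContDiffBump.contDiff _) x (by exact_mod_cast le_top)]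
    calc ‖(iteratedFDeriv ℝ j (⇑(cbump : ContDiffBump (0:E))) (L x)).compContinuousLinearMap
          fun _ => L‖
        ≤ ‖iteratedFDeriv ℝ j (⇑(cbump : ContDiffBump (0:E))) (L x)‖ * ∏ _i : Fin j, ‖L‖ :=
          ContinuousMultilinearMap.norm_compContinuousLinearMap_le _ _
      _ ≤ max C 0 * 1 := by
          apply mul_le_mul (hC' (L x))
            (Finset.prod_le_one (fun _ _ => norm_nonneg _) (fun _ _ => hLnorm))
            (Finset.prod_nonneg (fun _ _ => norm_nonneg _)) (le_max_right _ _)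
      _ = max C 0 := mul_one _
  choose B hB0 hB using key
  exact ⟨B, hB0, fun j R hR x => hB j R hR x⟩

end Aux
section Main
variable {E : Type*} [NormedAddCommGroup E] [NormedSpace ℝ E] [FiniteDimensional ℝ E]

lemma iteratedFDeriv_eq_zero_of_eventually {ψ : E → ℂ} {x : E} (n : ℕ)
    (h : ∀ᶠ y in nhds x, ψ y = 0) : iteratedFDeriv ℝ n ψ x = 0 := by
  have h' : ψ =ᶠ[nhdsWithin x Set.univ] (fun _ => (0:ℂ)) := by
    rw [nhdsWithin_univ]; exact h
  have := Filter.EventuallyEq.iteratedFDerivWithin_eq (𝕜 := ℝ) (f := fun _ => (0:ℂ)) h' (h.self_of_nhds) n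
  rw [← iteratedFDerivWithin_univ (𝕜 := ℝ)] at *
  rw [this, iteratedFDerivWithin_univ, iteratedFDeriv_zero_fun]
  rfl

/-- The cutoff of a Schwartz function at scale `R+1`, as a Schwartz function. -/
noncomputable def cutMulSch (g : 𝓢(E, ℂ)) (R : ℕ) : 𝓢(E, ℂ) :=
  mkCS (fun x => ccut ((R : ℝ) + 1) x * g x)
    ((ccut_contDiff _).mul g.smooth')
    (HasCompactSupport.intro (isCompact_closedBall (0:E) (2 * ((R:ℝ)+1)))
      (fun x hx => by
        have h0 : ccut ((R:ℝ)+1) x = 0 := by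
          have : cutFun ((R:ℝ)+1) x = 0 :=
            cutFun_eq_zero (le_add_of_nonneg_left (Nat.cast_nonneg R)) (le_of_lt (by simpa [dist_zero_right] using hx))
          simp [ccut, this]
        simp [h0]))

/-- The key seminorm estimate: the tails `g - χ_R g` are `O(1/R)` in each Schwartz seminorm. -/
lemma seminorm_tail_le (g : 𝓢(E, ℂ)) (k n : ℕ) :
    ∃ C : ℝ, 0 ≤ C ∧ ∀ R : ℕ,
      SchwartzMap.seminorm ℂ k n (g - cutMulSch g R) ≤ C / ((R : ℝ) + 1) := by
  obtain ⟨B, hB0, hB⟩ := exists_cut_bound (E := E)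
  set S : ℕ → ℝ := fun j => SchwartzMap.seminorm ℂ (k + 1) (n - j) g with hS
  set C : ℝ := ∑ j ∈ Finset.range (n + 1), (n.choose j : ℝ) * (1 + B j) * S j with hC
  have hS0 : ∀ j, 0 ≤ S j := fun j => apply_nonneg (SchwartzMap.seminorm ℂ (k + 1) (n - j)) g
  have hC0 : 0 ≤ C := Finset.sum_nonneg fun j _ =>
    mul_nonneg (mul_nonneg (Nat.cast_nonneg _) (by linarith [hB0 j])) (hS0 j)
  refine ⟨C, hC0, fun R => ?_⟩
  set ρ : ℝ := (R : ℝ) + 1 with hρ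
  have hρ1 : (1:ℝ) ≤ ρ := le_add_of_nonneg_left (Nat.cast_nonneg R)
  have hρ0 : (0:ℝ) < ρ := lt_of_lt_of_le one_pos hρ1
  refine SchwartzMap.seminorm_le_bound ℂ k n _ (div_nonneg hC0 hρ0.le) fun x => ?_
  -- rewrite the function
  have hcoe : ⇑(g - cutMulSch g R) = fun y => (1 - ccut ρ y) * g y := by
    funext y
    simp only [SchwartzMap.sub_apply, cutMulSch, mkCS_apply]
    ring
  rw [hcoe]
  by_cases hx : ‖x‖ < ρ
  · -- near the origin the function vanishes
    have hz : iteratedFDeriv ℝ n (fun y => (1 - ccut ρ y) * g y) x = 0 := by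
      refine iteratedFDeriv_eq_zero_of_eventually n ?_
      have hb : Metric.ball (0:E) ρ ∈ nhds x := by
        refine Metric.isOpen_ball.mem_nhds ?_
        simpa [dist_zero_right] using hx
      filter_upwards [hb] with y hy
      have : cutFun ρ y = 1 := cutFun_eq_one hρ1 (le_of_lt (by simpa [dist_zero_right] using hy))
      simp [ccut, this]
    rw [hz]
    simp only [norm_zero, mul_zero]
    exact div_nonneg hC0 hρ0.le
  · push_neg at hx
    have hx0 : (0:ℝ) ≤ ‖x‖ := norm_nonneg x
    -- derivative bounds for the factor `1 - ccut ρ`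
    have hfac : ∀ j : ℕ, ‖iteratedFDeriv ℝ j (fun y : E => 1 - ccut ρ y) x‖ ≤ 1 + B j := by
      intro j
      have hrw : (fun y : E => 1 - ccut ρ y)
          = ((fun _ : E => (1:ℂ)) + (-(ccut ρ))) := by
        funext y; simp [ccut, sub_eq_add_neg]
      rw [hrw, iteratedFDeriv_add_apply contDiff_const.contDiffAt
        ((show ContDiff ℝ ∞ (-(ccut ρ)) from (ccut_contDiff ρ).neg).of_le
          (show ((j:ℕ) : WithTop ℕ∞) ≤ ∞ from mod_cast le_top)).contDiffAt]
      refine (norm_add_le _ _).trans ?_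
      have h1 : ‖iteratedFDeriv ℝ j (fun _ : E => (1:ℂ)) x‖ ≤ 1 := by
        rcases j with _ | j
        · rw [norm_iteratedFDeriv_zero]; simp
        · rw [iteratedFDeriv_const_of_ne (Nat.succ_ne_zero j)]; simp
      have h2 : ‖iteratedFDeriv ℝ j (-(ccut ρ)) x‖ ≤ B j := by
        rw [iteratedFDeriv_neg_apply, norm_neg]
        exact hB j ρ hρ1 x
      linarith
    -- product rule estimate
    have hmul : ‖iteratedFDeriv ℝ n (fun y => (1 - ccut ρ y) * g y) x‖ ≤
        ∑ j ∈ Finset.range (n + 1), (n.choose j : ℝ) *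
          ‖iteratedFDeriv ℝ j (fun y : E => 1 - ccut ρ y) x‖ *
          ‖iteratedFDeriv ℝ (n - j) (⇑g) x‖ :=
      norm_iteratedFDeriv_mul_le ((contDiff_const.sub (ccut_contDiff ρ)).of_le (by exact_mod_cast le_top))
        (g.smooth'.of_le (by exact_mod_cast le_top)) x le_rfl
    calc ‖x‖ ^ k * ‖iteratedFDeriv ℝ n (fun y => (1 - ccut ρ y) * g y) x‖
        ≤ ‖x‖ ^ k * ∑ j ∈ Finset.range (n + 1), (n.choose j : ℝ) *
            ‖iteratedFDeriv ℝ j (fun y : E => 1 - ccut ρ y) x‖ *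
            ‖iteratedFDeriv ℝ (n - j) (⇑g) x‖ :=
          mul_le_mul_of_nonneg_left hmul (by positivity)
      _ = ∑ j ∈ Finset.range (n + 1), (n.choose j : ℝ) *
            ‖iteratedFDeriv ℝ j (fun y : E => 1 - ccut ρ y) x‖ *
            (‖x‖ ^ k * ‖iteratedFDeriv ℝ (n - j) (⇑g) x‖) := by
          rw [Finset.mul_sum]; congr 1; funext j; ring
      _ ≤ ∑ j ∈ Finset.range (n + 1), (n.choose j : ℝ) * (1 + B j) * (S j / ρ) := by
          refine Finset.sum_le_sum fun j _ => ?_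
          have hkey : ‖x‖ ^ k * ‖iteratedFDeriv ℝ (n - j) (⇑g) x‖ ≤ S j / ρ := by
            rw [le_div_iff₀ hρ0]
            calc ‖x‖ ^ k * ‖iteratedFDeriv ℝ (n - j) (⇑g) x‖ * ρ
                ≤ ‖x‖ ^ k * ‖iteratedFDeriv ℝ (n - j) (⇑g) x‖ * ‖x‖ := by
                  exact mul_le_mul_of_nonneg_left hx
                    (mul_nonneg (by positivity) (norm_nonneg _))
              _ = ‖x‖ ^ (k+1) * ‖iteratedFDeriv ℝ (n - j) (⇑g) x‖ := by ring
              _ ≤ S j := SchwartzMap.le_seminorm ℂ (k+1) (n-j) g x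
          have hnn : (0:ℝ) ≤ ‖x‖ ^ k * ‖iteratedFDeriv ℝ (n - j) (⇑g) x‖ := by positivity
          calc (n.choose j : ℝ) *
                ‖iteratedFDeriv ℝ j (fun y : E => 1 - ccut ρ y) x‖ *
                (‖x‖ ^ k * ‖iteratedFDeriv ℝ (n - j) (⇑g) x‖)
              ≤ (n.choose j : ℝ) * (1 + B j) *
                (‖x‖ ^ k * ‖iteratedFDeriv ℝ (n - j) (⇑g) x‖) := by
                refine mul_le_mul_of_nonneg_right ?_ hnn
                exact mul_le_mul_of_nonneg_left (hfac j) (by positivity)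
            _ ≤ (n.choose j : ℝ) * (1 + B j) * (S j / ρ) :=
                mul_le_mul_of_nonneg_left hkey
                  (mul_nonneg (Nat.cast_nonneg _) (by linarith [hB0 j]))
      _ = C / ρ := by rw [hC, Finset.sum_div]; congr 1; funext j; ring
end Main
section Vanish
variable {E : Type*} [NormedAddCommGroup E] [NormedSpace ℝ E] [FiniteDimensional ℝ E]

/-- A tempered distribution that annihilates every Schwartz function of the form `f ⬝ h`
(`f` smooth and nowhere vanishing) is zero. -/
lemma clm_eq_zero_of_mul (f : E → ℂ) (hfs : ContDiff ℝ ∞ f) (hf0 : ∀ x, f x ≠ 0)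
    (c : 𝓢(E, ℂ) →L[ℂ] ℂ)
    (hc : ∀ u h : 𝓢(E, ℂ), (∀ x, u x = f x * h x) → c u = 0)
    (g : 𝓢(E, ℂ)) : c g = 0 := by
  -- the compactly supported quotients
  have hdiv : ∀ R : ℕ, ContDiff ℝ ∞ fun x : E => ccut ((R : ℝ) + 1) x * g x * (f x)⁻¹ :=
    fun R => ((ccut_contDiff _).mul g.smooth').mul (hfs.inv hf0)
  set d : ℕ → 𝓢(E, ℂ) := fun R =>
    mkCS (fun x => ccut ((R : ℝ) + 1) x * g x * (f x)⁻¹) (hdiv R)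
      (HasCompactSupport.intro (isCompact_closedBall (0:E) (2 * ((R:ℝ)+1)))
        (fun x hx => by
          have h0 : cutFun ((R:ℝ)+1) x = 0 :=
            cutFun_eq_zero (le_add_of_nonneg_left (Nat.cast_nonneg R))
              (le_of_lt (by simpa [dist_zero_right] using hx))
          simp [ccut, h0])) with hd
  -- the cutoffs of `g` are annihilated by `c`
  have hcut0 : ∀ R : ℕ, c (cutMulSch g R) = 0 := by
    intro R
    refine hc (cutMulSch g R) (d R) fun x => ?_
    simp only [hd, cutMulSch, mkCS_apply]
    rw [mul_comm (f x), mul_assoc, inv_mul_cancel₀ (hf0 x), mul_one]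
  -- continuity bound for `c`
  set q : Seminorm ℂ 𝓢(E, ℂ) := (normSeminorm ℂ ℂ).comp (c : 𝓢(E, ℂ) →ₗ[ℂ] ℂ) with hqdef
  have hqc : Continuous q := by
    have : ⇑q = fun u => ‖c u‖ := rfl
    rw [this]
    exact c.continuous.norm
  obtain ⟨s, Cq, hCq0, hq⟩ :=
    Seminorm.bound_of_continuous (schwartz_withSeminorms ℂ E ℂ) q hqc
  choose D hD0 hD using fun i : ℕ × ℕ => seminorm_tail_le g i.1 i.2
  set D0 : ℝ := ∑ i ∈ s, D i with hD0def
  have hD00 : 0 ≤ D0 := Finset.sum_nonneg fun i _ => hD0 i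
  -- the main bound
  have hbound : ∀ R : ℕ, ‖c g‖ ≤ (Cq * D0) / ((R:ℝ) + 1) := by
    intro R
    have hρ0 : (0:ℝ) < (R:ℝ) + 1 := by positivity
    have h1 : c g = c (g - cutMulSch g R) := by rw [map_sub, hcut0 R, sub_zero]
    have h2 : ‖c (g - cutMulSch g R)‖ = q (g - cutMulSch g R) := rfl
    rw [h1, h2]
    have h3 : q (g - cutMulSch g R) ≤
        Cq • (s.sup (schwartzSeminormFamily ℂ E ℂ)) (g - cutMulSch g R) :=
      hq (g - cutMulSch g R)
    have h4 : (s.sup (schwartzSeminormFamily ℂ E ℂ)) (g - cutMulSch g R) ≤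
        D0 / ((R:ℝ) + 1) := by
      refine Seminorm.finset_sup_apply_le (div_nonneg hD00 hρ0.le) fun i hi => ?_
      have h5 : SchwartzMap.seminorm ℂ i.1 i.2 (g - cutMulSch g R) ≤ D i / ((R:ℝ)+1) := hD i R
      refine h5.trans ?_
      have h6 : D i ≤ D0 := Finset.single_le_sum (fun i _ => hD0 i) hi
      gcongr
    calc q (g - cutMulSch g R)
        ≤ Cq • (s.sup (schwartzSeminormFamily ℂ E ℂ)) (g - cutMulSch g R) := h3
      _ = (Cq : ℝ) * (s.sup (schwartzSeminormFamily ℂ E ℂ)) (g - cutMulSch g R) := by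
          simp [NNReal.smul_def]
      _ ≤ (Cq : ℝ) * (D0 / ((R:ℝ) + 1)) :=
          mul_le_mul_of_nonneg_left h4 (NNReal.coe_nonneg Cq)
      _ = (Cq * D0) / ((R:ℝ) + 1) := by ring
  -- let `R → ∞`
  have htend : Filter.Tendsto (fun R : ℕ => ((Cq : ℝ) * D0) / ((R:ℝ) + 1))
      Filter.atTop (nhds 0) := by
    have h := (tendsto_const_div_atTop_nhds_zero_nat ((Cq : ℝ) * D0)).comp
      (Filter.tendsto_add_atTop_nat 1)
    convert h using 2 with R
    simp only [Function.comp]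
    push_cast
    ring
  have : ‖c g‖ ≤ 0 :=
    ge_of_tendsto htend (Filter.Eventually.of_forall fun R => hbound R)
  simpa using norm_le_zero_iff.mp this
end Vanish


/-- If the Schwartz family `w` (with associated operator `W`) is 𝒮-linearly independent and
`f` is slowly increasing and nowhere vanishing, then the product family `fw` (with associated
operator `M_f ∘ W`) is 𝒮-linearly independent. -/
theorem mul_independent {n m : ℕ}
    (W : 𝓢((Fin n → ℝ), ℂ) →L[ℂ] 𝓢((Fin m → ℝ), ℂ))
    (f : (Fin m → ℝ) → ℂ) (hf : SlowlyIncreasing f) (hf0 : ∀ x, f x ≠ 0)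
    (M : 𝓢((Fin m → ℝ), ℂ) →L[ℂ] 𝓢((Fin m → ℝ), ℂ))
    (hM : ∀ (g : 𝓢((Fin m → ℝ), ℂ)) (x : Fin m → ℝ), M g x = f x * g x)
    (hW : Function.Injective
      (fun a : 𝓢((Fin m → ℝ), ℂ) →L[ℂ] ℂ => a.comp W)) :
    Function.Injective
      (fun a : 𝓢((Fin m → ℝ), ℂ) →L[ℂ] ℂ => a.comp (M.comp W)) := by
  intro a b hab
  have hab' : (a.comp M).comp W = (b.comp M).comp W := by
    simpa [ContinuousLinearMap.comp_assoc] using hab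
  have h2 : a.comp M = b.comp M := hW hab'
  have hc : ∀ h : 𝓢((Fin m → ℝ), ℂ), (a - b) (M h) = 0 := by
    intro h
    have h3 : a (M h) = b (M h) := by
      have := congrArg (fun T : 𝓢((Fin m → ℝ), ℂ) →L[ℂ] ℂ => T h) h2
      simpa using this
    simp [h3]
  have hfs : ContDiff ℝ ∞ f := hf.1.of_le (by simp)
  have hzero : ∀ g : 𝓢((Fin m → ℝ), ℂ), (a - b) g = 0 := by
    intro g
    refine clm_eq_zero_of_mul f hfs hf0 (a - b) ?_ g
    intro u h hx
    have hu : u = M h := by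
      ext x
      rw [hx x, hM]
    rw [hu]
    exact hc h
  have hsub : a - b = 0 := by
    ext g
    simpa using hzero g
  exact sub_eq_zero.mp hsub
end

section
/- Let W : 𝒮_n → 𝒮_m be a continuous linear operator (the associated operator of a Schwartz family w), and let f : ℝ^m → ℂ be an invertible slowly increasing smooth function, i.e. f(x) ≠ 0 for all x and the pointwise reciprocal 1/f is also slowly increasing. Then the 𝒮-span of w equals the 𝒮-span of fw: the range of the map 𝒮'_m → 𝒮'_n, a ↦ a ∘ W, equals the range of the map a ↦ a ∘ (M_f ∘ W). -/
open SchwartzMap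

/-! ### Auxiliary lemmas -/

/-- Iterated partial derivatives along a list of directions. -/
noncomputable def derivList {m : ℕ} (l : List (Fin m)) (g : (Fin m → ℝ) → ℂ) :
    (Fin m → ℝ) → ℂ :=
  l.foldr pDeriv g

lemma contDiff_pDeriv {m : ℕ} {g : (Fin m → ℝ) → ℂ} (hg : ContDiff ℝ (⊤ : ℕ∞) g) (i : Fin m) :
    ContDiff ℝ (⊤ : ℕ∞) (pDeriv i g) := by
  have h := hg.fderiv_right (m := (⊤ : ℕ∞)) (by simp)
  exact h.clm_apply contDiff_const

lemma contDiff_derivList {m : ℕ} {g : (Fin m → ℝ) → ℂ} (hg : ContDiff ℝ (⊤ : ℕ∞) g)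
    (l : List (Fin m)) : ContDiff ℝ (⊤ : ℕ∞) (derivList l g) := by
  induction l with
  | nil => exact hg
  | cons a l ih => exact contDiff_pDeriv ih a

lemma iteratedFDeriv_eq_derivList {m : ℕ} {g : (Fin m → ℝ) → ℂ} (hg : ContDiff ℝ (⊤ : ℕ∞) g) :
    ∀ (n : ℕ) (j : Fin n → Fin m) (x : Fin m → ℝ),
      iteratedFDeriv ℝ n g x (fun k => Pi.single (j k) 1) = derivList (List.ofFn j) g x := by
  intro n
  induction n with
  | zero => intro j x; simp [derivList, iteratedFDeriv_zero_apply]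
  | succ n ih =>
    intro j x
    rw [iteratedFDeriv_succ_apply_left]
    have hdiff : DifferentiableAt ℝ (iteratedFDeriv ℝ n g) x :=
      (hg.differentiable_iteratedFDeriv
        (by exact_mod_cast lt_top_iff_ne_top.2 (by simp))).differentiableAt
    set A := ContinuousMultilinearMap.apply ℝ (fun _ : Fin n => (Fin m → ℝ)) ℂ
      (fun k => Pi.single (j k.succ) 1) with hA
    have htail : Fin.tail (fun k : Fin (n+1) => (Pi.single (j k) 1 : Fin m → ℝ))
        = fun k : Fin n => Pi.single (j k.succ) 1 := rfl
    rw [htail]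
    have h1 : (fderiv ℝ (iteratedFDeriv ℝ n g) x (Pi.single (j 0) 1))
          (fun k : Fin n => Pi.single (j k.succ) 1)
        = A (fderiv ℝ (iteratedFDeriv ℝ n g) x (Pi.single (j 0) 1)) := rfl
    rw [h1]
    have h2 : A (fderiv ℝ (iteratedFDeriv ℝ n g) x (Pi.single (j 0) 1))
        = fderiv ℝ (fun y => A (iteratedFDeriv ℝ n g y)) x (Pi.single (j 0) 1) := by
      rw [show (fun y => A (iteratedFDeriv ℝ n g y)) = A ∘ (iteratedFDeriv ℝ n g) from rfl,
        fderiv_comp x A.differentiableAt hdiff]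
      simp [ContinuousLinearMap.fderiv]
    rw [h2]
    have h3 : (fun y => A (iteratedFDeriv ℝ n g y)) = derivList (List.ofFn (j ∘ Fin.succ)) g := by
      funext y
      exact ih (j ∘ Fin.succ) y
    rw [h3, List.ofFn_succ]
    rfl

lemma pDeriv_eq_second {m : ℕ} {g : (Fin m → ℝ) → ℂ} (hg : ContDiff ℝ (⊤ : ℕ∞) g)
    (v w : Fin m → ℝ) (x : Fin m → ℝ) :
    fderiv ℝ (fun y => fderiv ℝ g y w) x v = fderiv ℝ (fderiv ℝ g) x v w := by
  have hg1 : ContDiff ℝ (⊤ : ℕ∞) (fderiv ℝ g) := hg.fderiv_right (m := (⊤ : ℕ∞)) (by simp)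
  set A := ContinuousLinearMap.apply ℝ ℂ w with hA
  have h1 : (fun y => fderiv ℝ g y w) = A ∘ (fderiv ℝ g) := rfl
  rw [h1, fderiv_comp x A.differentiableAt (hg1.differentiable (by simp)).differentiableAt]
  simp [ContinuousLinearMap.fderiv, hA]

lemma pDeriv_comm {m : ℕ} {g : (Fin m → ℝ) → ℂ} (hg : ContDiff ℝ (⊤ : ℕ∞) g) (i j : Fin m) :
    pDeriv i (pDeriv j g) = pDeriv j (pDeriv i g) := by
  have hg1 : ContDiff ℝ (⊤ : ℕ∞) (fderiv ℝ g) := hg.fderiv_right (m := (⊤ : ℕ∞)) (by simp)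
  funext x
  have hsymm := second_derivative_symmetric
    (f := g) (f' := fderiv ℝ g) (f'' := fderiv ℝ (fderiv ℝ g) x) (x := x)
    (fun y => ((hg.differentiable (by simp)) y).hasFDerivAt)
    ((hg1.differentiable (by simp) x).hasFDerivAt)
  show fderiv ℝ (fun y => fderiv ℝ g y (Pi.single j 1)) x (Pi.single i 1)
    = fderiv ℝ (fun y => fderiv ℝ g y (Pi.single i 1)) x (Pi.single j 1)
  rw [pDeriv_eq_second hg, pDeriv_eq_second hg, hsymm]

lemma derivList_perm {m : ℕ} {g : (Fin m → ℝ) → ℂ} (hg : ContDiff ℝ (⊤ : ℕ∞) g)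
    {l₁ l₂ : List (Fin m)} (h : l₁.Perm l₂) :
    (l₁.foldr pDeriv g) = (l₂.foldr pDeriv g) := by
  induction h with
  | nil => rfl
  | cons a _ ih => simp only [List.foldr_cons, ih]
  | swap a b l =>
      simp only [List.foldr_cons]
      have : ContDiff ℝ (⊤ : ℕ∞) (l.foldr pDeriv g) := contDiff_derivList hg l
      rw [pDeriv_comm this a b]
  | trans _ _ ih₁ ih₂ => rw [ih₁, ih₂]

/-- canonical sorted list for a multi-index -/
def mindexList {m : ℕ} (α : Fin m → ℕ) : List (Fin m) :=
  (List.finRange m).flatMap fun i => List.replicate (α i) i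

lemma iterate_pDeriv_eq {m : ℕ} (i : Fin m) (k : ℕ) (g : (Fin m → ℝ) → ℂ) :
    (pDeriv i)^[k] g = derivList (List.replicate k i) g := by
  induction k with
  | zero => rfl
  | succ k ih => rw [Function.iterate_succ_apply', ih]; rfl

lemma derivList_append {m : ℕ} (l₁ l₂ : List (Fin m)) (g : (Fin m → ℝ) → ℂ) :
    derivList (l₁ ++ l₂) g = derivList l₁ (derivList l₂ g) := by
  simp [derivList, List.foldr_append]

lemma multiDeriv_eq_derivList {m : ℕ} (α : Fin m → ℕ) (g : (Fin m → ℝ) → ℂ) :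
    multiDeriv α g = derivList (mindexList α) g := by
  show (List.finRange m).foldr (fun i h => (pDeriv i)^[α i] h) g = _
  unfold mindexList
  induction (List.finRange m) with
  | nil => rfl
  | cons a l ih => rw [List.foldr_cons, ih, List.flatMap_cons, derivList_append,
      iterate_pDeriv_eq]

lemma count_mindexList {m : ℕ} (α : Fin m → ℕ) (a : Fin m) :
    (mindexList α).count a = α a := by
  unfold mindexList
  have key : ∀ l : List (Fin m), ((l.flatMap fun i => List.replicate (α i) i).count a)
      = (l.count a) * α a := by
    intro l
    induction l with
    | nil => simp
    | cons b l ih =>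
        rw [List.flatMap_cons, List.count_append, ih, List.count_replicate, List.count_cons]
        by_cases h : b = a
        · subst h; simp [add_mul]; ring
        · simp [h, Ne.symm h]
  rw [key, List.count_eq_one_of_mem (List.nodup_finRange m) (List.mem_finRange a), one_mul]

lemma mvpoly_bound {m : ℕ} (P : MvPolynomial (Fin m) ℝ) :
    ∃ (C : ℝ) (k : ℕ), 0 ≤ C ∧ ∀ x : Fin m → ℝ, |MvPolynomial.eval x P| ≤ C * (1 + ‖x‖) ^ k := by
  induction P using MvPolynomial.induction_on with
  | C c => exact ⟨|c|, 0, abs_nonneg c, fun x => by simp⟩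
  | add p q hp hq =>
      obtain ⟨C1, k1, hC1, h1⟩ := hp
      obtain ⟨C2, k2, hC2, h2⟩ := hq
      refine ⟨C1 + C2, max k1 k2, by positivity, fun x => ?_⟩
      have hx : (1:ℝ) ≤ 1 + ‖x‖ := by linarith [norm_nonneg x]
      calc |MvPolynomial.eval x (p + q)| ≤ |MvPolynomial.eval x p| + |MvPolynomial.eval x q| := by
            rw [map_add]; exact abs_add_le _ _
        _ ≤ C1 * (1 + ‖x‖) ^ k1 + C2 * (1 + ‖x‖) ^ k2 := add_le_add (h1 x) (h2 x)
        _ ≤ C1 * (1 + ‖x‖) ^ (max k1 k2) + C2 * (1 + ‖x‖) ^ (max k1 k2) := by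
            gcongr <;> simp [hx, le_max_left, le_max_right]
        _ = (C1 + C2) * (1 + ‖x‖) ^ (max k1 k2) := by ring
  | mul_X p i hp =>
      obtain ⟨C, k, hC, h⟩ := hp
      refine ⟨C, k + 1, hC, fun x => ?_⟩
      have hx : (1:ℝ) ≤ 1 + ‖x‖ := by linarith [norm_nonneg x]
      have hxi : |x i| ≤ 1 + ‖x‖ := by
        calc |x i| ≤ ‖x‖ := by
              simpa using norm_le_pi_norm x i
          _ ≤ 1 + ‖x‖ := by linarith
      calc |MvPolynomial.eval x (p * MvPolynomial.X i)| = |MvPolynomial.eval x p| * |x i| := by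
            simp [abs_mul]
        _ ≤ (C * (1 + ‖x‖) ^ k) * (1 + ‖x‖) := by
            apply mul_le_mul (h x) hxi (abs_nonneg _) (by positivity)
        _ = C * (1 + ‖x‖) ^ (k + 1) := by ring

lemma single_eq_smul {m : ℕ} (j : Fin m) (c : ℝ) :
    (Pi.single j c : Fin m → ℝ) = c • (Pi.single j 1 : Fin m → ℝ) := by
  funext t
  by_cases h : t = j <;> simp [Pi.single_apply, h]

lemma opNorm_le_sum_basis {m k : ℕ}
    (A : ContinuousMultilinearMap ℝ (fun _ : Fin k => (Fin m → ℝ)) ℂ) :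
    ‖A‖ ≤ ∑ r : Fin k → Fin m, ‖A (fun i => Pi.single (r i) 1)‖ := by
  refine A.opNorm_le_bound (Finset.sum_nonneg fun _ _ => norm_nonneg _) fun v => ?_
  have hv : v = fun i => ∑ j : Fin m, (v i j) • (Pi.single j 1 : Fin m → ℝ) := by
    funext i
    conv_lhs => rw [← Finset.univ_sum_single (v i)]
    exact Finset.sum_congr rfl fun j _ => single_eq_smul j (v i j)
  calc ‖A v‖ = ‖∑ r : Fin k → Fin m, (∏ i, v i (r i)) • A (fun i => Pi.single (r i) 1)‖ := by
        conv_lhs => rw [hv]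
        rw [show (A fun i => ∑ j : Fin m, (v i j) • (Pi.single j 1 : Fin m → ℝ))
            = ∑ r : Fin k → Fin m, A (fun i => v i (r i) • (Pi.single (r i) 1 : Fin m → ℝ))
          from A.toMultilinearMap.map_sum (g := fun i j => (v i j) • (Pi.single j 1 : Fin m → ℝ))]
        exact congrArg _ (Finset.sum_congr rfl fun r _ =>
          (A.toMultilinearMap.map_smul_univ (fun i => v i (r i))
            (fun i => Pi.single (r i) 1)).symm ▸ rfl)
    _ ≤ ∑ r : Fin k → Fin m, ‖(∏ i, v i (r i)) • A (fun i => Pi.single (r i) 1)‖ :=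
        norm_sum_le _ _
    _ ≤ ∑ r : Fin k → Fin m, ‖A (fun i => Pi.single (r i) 1)‖ * ∏ i, ‖v i‖ := by
        refine Finset.sum_le_sum fun r _ => ?_
        rw [norm_smul]
        rw [mul_comm]
        gcongr
        calc ‖∏ i, v i (r i)‖ = ∏ i, ‖v i (r i)‖ := by
              rw [norm_prod]
          _ ≤ ∏ i, ‖v i‖ := Finset.prod_le_prod (fun _ _ => norm_nonneg _)
              (fun i _ => norm_le_pi_norm (v i) (r i))
    _ = (∑ r : Fin k → Fin m, ‖A (fun i => Pi.single (r i) 1)‖) * ∏ i, ‖v i‖ := by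
        rw [Finset.sum_mul]

lemma SlowlyIncreasing.hasTemperateGrowth {m : ℕ} {f : (Fin m → ℝ) → ℂ}
    (hf : SlowlyIncreasing f) : Function.HasTemperateGrowth f := by
  refine ⟨hf.1.of_le (by simp), fun n => ?_⟩
  -- for each direction tuple, a polynomial bound
  have key : ∀ r : Fin n → Fin m, ∃ (C : ℝ) (k : ℕ), 0 ≤ C ∧ ∀ x : Fin m → ℝ,
      ‖iteratedFDeriv ℝ n f x (fun i => Pi.single (r i) 1)‖ ≤ C * (1 + ‖x‖) ^ k := by
    intro r
    set α : Fin m → ℕ := fun i => (List.ofFn r).count i with hα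
    obtain ⟨P, hP⟩ := hf.2 α
    obtain ⟨C, k, hC, hCk⟩ := mvpoly_bound P
    refine ⟨C, k, hC, fun x => ?_⟩
    have hperm : (List.ofFn r).Perm (mindexList α) := by
      rw [List.perm_iff_count]
      intro a
      rw [count_mindexList]
    have : iteratedFDeriv ℝ n f x (fun i => Pi.single (r i) 1) = multiDeriv α f x := by
      rw [iteratedFDeriv_eq_derivList hf.1 n r x, multiDeriv_eq_derivList]
      exact congrFun (derivList_perm hf.1 hperm) x
    rw [this]
    exact le_trans (hP x) (hCk x)
  choose C k hC hbound using key
  refine ⟨Finset.univ.sup k, ∑ r : Fin n → Fin m, C r, fun x => ?_⟩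
  have hx : (1:ℝ) ≤ 1 + ‖x‖ := by linarith [norm_nonneg x]
  calc ‖iteratedFDeriv ℝ n f x‖
      ≤ ∑ r : Fin n → Fin m, ‖iteratedFDeriv ℝ n f x (fun i => Pi.single (r i) 1)‖ :=
        opNorm_le_sum_basis _
    _ ≤ ∑ r : Fin n → Fin m, C r * (1 + ‖x‖) ^ (Finset.univ.sup k) := by
        refine Finset.sum_le_sum fun r _ => ?_
        refine le_trans (hbound r x) ?_
        gcongr
        · exact hC r
        · exact Finset.le_sup (Finset.mem_univ r)
    _ = (∑ r : Fin n → Fin m, C r) * (1 + ‖x‖) ^ (Finset.univ.sup k) := by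
        rw [Finset.sum_mul]

/-- For an invertible slowly increasing smooth `f` (nowhere vanishing, with slowly increasing
pointwise reciprocal), the 𝒮-span of `w` equals the 𝒮-span of the product family `fw`:
the range of `a ↦ a ∘ W` equals the range of `a ↦ a ∘ (M_f ∘ W)`. -/
theorem span_eq_span_mul {n m : ℕ}
    (W : 𝓢((Fin n → ℝ), ℂ) →L[ℂ] 𝓢((Fin m → ℝ), ℂ))
    (f : (Fin m → ℝ) → ℂ) (hf : SlowlyIncreasing f) (hf0 : ∀ x, f x ≠ 0)
    (hfinv : SlowlyIncreasing (fun x => (f x)⁻¹))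
    (M : 𝓢((Fin m → ℝ), ℂ) →L[ℂ] 𝓢((Fin m → ℝ), ℂ))
    (hM : ∀ (g : 𝓢((Fin m → ℝ), ℂ)) (x : Fin m → ℝ), M g x = f x * g x) :
    Set.range (fun a : 𝓢((Fin m → ℝ), ℂ) →L[ℂ] ℂ => a.comp W) =
      Set.range (fun a : 𝓢((Fin m → ℝ), ℂ) →L[ℂ] ℂ => a.comp (M.comp W)) := by
  -- the multiplication-by-`f⁻¹` operator
  have hg : Function.HasTemperateGrowth (fun x => (f x)⁻¹) := hfinv.hasTemperateGrowth
  let N₀ : 𝓢((Fin m → ℝ), ℂ) →L[ℝ] 𝓢((Fin m → ℝ), ℂ) :=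
    SchwartzMap.bilinLeftCLM (ContinuousLinearMap.mul ℝ ℂ) hg
  have hN₀ : ∀ (h : 𝓢((Fin m → ℝ), ℂ)) (x), N₀ h x = h x * (f x)⁻¹ := fun _ _ => rfl
  let N : 𝓢((Fin m → ℝ), ℂ) →L[ℂ] 𝓢((Fin m → ℝ), ℂ) :=
    { toFun := N₀
      map_add' := fun a b => map_add N₀ a b
      map_smul' := fun c h => by
        apply SchwartzMap.ext
        intro x
        simp only [RingHom.id_apply, SchwartzMap.smul_apply, hN₀, smul_eq_mul]
        ring
      cont := N₀.continuous }
  have hNM : ∀ g : 𝓢((Fin m → ℝ), ℂ), N (M g) = g := by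
    intro g
    apply SchwartzMap.ext
    intro x
    show N₀ (M g) x = g x
    rw [hN₀, hM]
    rw [mul_comm (f x) (g x), mul_assoc, mul_inv_cancel₀ (hf0 x), mul_one]
  apply Set.eq_of_subset_of_subset
  · rintro b ⟨a, rfl⟩
    refine ⟨a.comp N, ?_⟩
    apply ContinuousLinearMap.ext
    intro u
    simp only [ContinuousLinearMap.comp_apply, hNM]
  · rintro b ⟨a, rfl⟩
    exact ⟨a.comp M, rfl⟩
end
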